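/- Let ε ∈ (0,1] and let P : ℝ → ℝ be a C² function such that P', P'' ∈ L²(ℝ) and P'(x) → 0 as x → ±∞; set u(x) = ∂ₓP(x) − ε ∂ₓₓP(x). Then √ε · ‖∂ₓP‖_{L^∞(ℝ)} ≤ ‖u‖_{L²(ℝ)}. -/

import Mathlib

/-! Write `f = ∂ₓP`, so that `u = f - ε f'`. Since `f` vanishes at `+∞`,
`ε f(a)² = -2ε ∫_a^∞ f f'`, and `-2ε f f' ≤ f² - 2ε f f' + ε² f'² = u²` pointwise,
hence `ε f(a)² ≤ ∫_a^∞ u² ≤ ‖u‖²_{L²}`. -/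

open MeasureTheory Filter Real Set

open scoped Topology

theorem sq_eq_neg_two_mul_integral_Ioi_mul_deriv {f f' : ℝ → ℝ} {a : ℝ}
    (hf : ∀ x ∈ Ici a, HasDerivAt f (f' x) x) (hff' : IntegrableOn (fun x => f x * f' x) (Ioi a))
    (hlim : Tendsto f atTop (𝓝 0)) :
    f a ^ 2 = -2 * ∫ x in Ioi a, f x * f' x := by
  have hsq : ∀ x ∈ Ici a, HasDerivAt (fun y => f y ^ 2) (2 * (f x * f' x)) x := fun x hx => by
    simpa [mul_assoc] using (hf x hx).fun_pow 2
  have := integral_Ioi_of_hasDerivAt_of_tendsto' hsq (hff'.const_mul 2)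
    (by simpa using hlim.pow 2)
  rw [integral_const_mul] at this
  linarith

theorem mul_sq_le_setIntegral_Ioi_sq_sub_mul_deriv {f f' : ℝ → ℝ} {a : ℝ} (ε : ℝ)
    (hf : ∀ x ∈ Ici a, HasDerivAt f (f' x) x) (hff' : IntegrableOn (fun x => f x * f' x) (Ioi a))
    (hu : IntegrableOn (fun x => (f x - ε * f' x) ^ 2) (Ioi a))
    (hlim : Tendsto f atTop (𝓝 0)) :
    ε * f a ^ 2 ≤ ∫ x in Ioi a, (f x - ε * f' x) ^ 2 :=
  calc ε * f a ^ 2 = ∫ x in Ioi a, -2 * ε * (f x * f' x) := by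
        rw [sq_eq_neg_two_mul_integral_Ioi_mul_deriv hf hff' hlim, integral_const_mul]; ring
    _ ≤ ∫ x in Ioi a, (f x - ε * f' x) ^ 2 :=
        setIntegral_mono_on (hff'.const_mul _) hu measurableSet_Ioi fun x _ => by
          nlinarith [sq_nonneg (f x), sq_nonneg (ε * f' x)]

theorem stmt1_general (ε : ℝ) (P u : ℝ → ℝ)
    (hP : ContDiff ℝ 2 P)
    (hPx : Integrable (fun x => (deriv P x) ^ 2))
    (hPxx : Integrable (fun x => (iteratedDeriv 2 P x) ^ 2))
    (hPx_top : Tendsto (deriv P) atTop (nhds 0))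
    (hu : ∀ x, u x = deriv P x - ε * iteratedDeriv 2 P x) :
    ∀ x : ℝ, Real.sqrt ε * |deriv P x| ≤ Real.sqrt (∫ x, (u x) ^ 2) := by
  intro x
  have hderiv : ∀ y, HasDerivAt (deriv P) (iteratedDeriv 2 P y) y := fun y => by
    simpa [iteratedDeriv_succ] using
      (hP.differentiable_iteratedDeriv 1 (by norm_num) y).hasDerivAt
  have hPx_L2 : MemLp (deriv P) 2 :=
    (memLp_two_iff_integrable_sq (hP.continuous_deriv one_le_two).aestronglyMeasurable).2 hPx
  have hPxx_L2 : MemLp (iteratedDeriv 2 P) 2 :=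
    (memLp_two_iff_integrable_sq
      (hP.continuous_iteratedDeriv 2 le_rfl).aestronglyMeasurable).2 hPxx
  obtain rfl : u = fun y => deriv P y - ε * iteratedDeriv 2 P y := funext hu
  have hu_sq : Integrable (fun y => (deriv P y - ε * iteratedDeriv 2 P y) ^ 2) :=
    (hPx_L2.sub (hPxx_L2.const_mul ε)).integrable_sq
  have hkey : ε * deriv P x ^ 2 ≤ ∫ y, (deriv P y - ε * iteratedDeriv 2 P y) ^ 2 :=
    calc ε * deriv P x ^ 2 ≤ ∫ y in Ioi x, (deriv P y - ε * iteratedDeriv 2 P y) ^ 2 :=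
          mul_sq_le_setIntegral_Ioi_sq_sub_mul_deriv ε (fun y _ => hderiv y)
            (hPx_L2.integrable_mul hPxx_L2).integrableOn hu_sq.integrableOn hPx_top
      _ ≤ ∫ y, (deriv P y - ε * iteratedDeriv 2 P y) ^ 2 :=
          setIntegral_le_integral hu_sq (Eventually.of_forall fun y => sq_nonneg _)
  calc √ε * |deriv P x| = √(ε * deriv P x ^ 2) := by
        rw [sqrt_mul' _ (sq_nonneg _), sqrt_sq_eq_abs]
    _ ≤ _ := sqrt_le_sqrt hkey

theorem stmt1 (ε : ℝ) (hε : ε ∈ Set.Ioc (0:ℝ) 1) (P u : ℝ → ℝ)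
    (hP : ContDiff ℝ 2 P)
    (hPx : Integrable (fun x => (deriv P x) ^ 2))
    (hPxx : Integrable (fun x => (iteratedDeriv 2 P x) ^ 2))
    (hPx_top : Tendsto (deriv P) atTop (nhds 0))
    (hPx_bot : Tendsto (deriv P) atBot (nhds 0))
    (hu : ∀ x, u x = deriv P x - ε * iteratedDeriv 2 P x) :
    ∀ x : ℝ, Real.sqrt ε * |deriv P x| ≤ Real.sqrt (∫ x, (u x) ^ 2) :=
  stmt1_general ε P u hP hPx hPxx hPx_top hu
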